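/- Let L = log(1+√2). For a pair of integers (a,b) with a + b√2 ≠ 0 (so also a − b√2 ≠ 0), define η(a,b) = sgn(a + b√2)·sgn(a − b√2)·exp( i·(π/(2L))·log|(a + b√2)/(a − b√2)| ) ∈ ℂ. Then η(a,b) depends only on the ideal generated by a + b√2 in ℤ[√2]: for all integers a, b, a′, b′, every k ∈ ℤ, and every s ∈ {1, −1}, if a + b√2 ≠ 0 and a′ + b′√2 = s·(1+√2)^k·(a + b√2) (as real numbers), then η(a′,b′) = η(a,b). -/
import Mathlib


open Real

/-- The Hecke character `η` on nonzero elements `a + b√2` of `ℤ[√2]`, given by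
`η(a + b√2) = sgn(a + b√2)·sgn(a − b√2)·|(a + b√2)/(a − b√2)|^(iπ/(2 log(1+√2)))`. -/
noncomputable def heckeEta (a b : ℤ) : ℂ :=
  ((Real.sign ((a : ℝ) + (b : ℝ) * Real.sqrt 2) *
      Real.sign ((a : ℝ) - (b : ℝ) * Real.sqrt 2) : ℝ) : ℂ) *
    Complex.exp (Complex.I * (π / (2 * Real.log (1 + Real.sqrt 2))) *
      (Real.log |((a : ℝ) + (b : ℝ) * Real.sqrt 2) / ((a : ℝ) - (b : ℝ) * Real.sqrt 2)| : ℝ))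



lemma int_sqrt2_eq_zero (p q : ℤ) (h : (p:ℝ) + (q:ℝ)*Real.sqrt 2 = 0) : p = 0 ∧ q = 0 := by
  by_cases hq : q = 0
  · subst hq; simp at h; exact ⟨by exact_mod_cast h, rfl⟩
  · exfalso
    have hq' : (q:ℝ) ≠ 0 := Int.cast_ne_zero.mpr hq
    have : Real.sqrt 2 = ((-p : ℚ)/(q:ℚ) : ℚ) := by
      push_cast
      field_simp
      linarith
    exact irrational_sqrt_two ⟨(-p : ℚ)/(q:ℚ), this.symm⟩

lemma pow_nat_repr (n : ℕ) : ∃ p q : ℤ, (1+Real.sqrt 2)^n = (p:ℝ) + q*Real.sqrt 2 ∧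
    (1-Real.sqrt 2)^n = (p:ℝ) - q*Real.sqrt 2 ∧ p^2 - 2*q^2 = (-1)^n := by
  have h2 : Real.sqrt 2 ^ 2 = 2 := Real.sq_sqrt (by norm_num)
  induction n with
  | zero => exact ⟨1, 0, by norm_num, by norm_num, by norm_num⟩
  | succ n ih =>
    obtain ⟨p, q, h1, h3, hn⟩ := ih
    refine ⟨p + 2*q, p + q, ?_, ?_, ?_⟩
    · rw [pow_succ, h1]; push_cast; linear_combination (q:ℝ)*h2
    · rw [pow_succ, h3]; push_cast; linear_combination (q:ℝ)*h2
    · rw [pow_succ]; linear_combination (-1)*hn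

lemma zpow_repr (k : ℤ) : ∃ p q : ℤ, (1+Real.sqrt 2)^k = (p:ℝ) + q*Real.sqrt 2 ∧
    (1-Real.sqrt 2)^k = (p:ℝ) - q*Real.sqrt 2 := by
  have h2 : Real.sqrt 2 ^ 2 = 2 := Real.sq_sqrt (by norm_num)
  obtain ⟨n, rfl | rfl⟩ := k.eq_nat_or_neg
  · obtain ⟨p, q, h1, h3, _⟩ := pow_nat_repr n
    exact ⟨p, q, by rw [zpow_natCast, h1], by rw [zpow_natCast, h3]⟩
  · obtain ⟨p, q, h1, h3, hn⟩ := pow_nat_repr n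
    have hnR : (p:ℝ)^2 - 2*(q:ℝ)^2 = (-1:ℝ)^n := by exact_mod_cast hn
    have he : (-1:ℝ)^n * (-1:ℝ)^n = 1 := by rw [← mul_pow]; norm_num
    refine ⟨(-1)^n * p, -((-1)^n * q), ?_, ?_⟩
    · rw [zpow_neg, zpow_natCast, h1]
      refine inv_eq_of_mul_eq_one_left ?_
      push_cast
      linear_combination (-1:ℝ)^n*hnR - (-1:ℝ)^n*(q:ℝ)^2*h2 + he
    · rw [zpow_neg, zpow_natCast, h3]
      refine inv_eq_of_mul_eq_one_left ?_
      push_cast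
      linear_combination (-1:ℝ)^n*hnR - (-1:ℝ)^n*(q:ℝ)^2*h2 + he

lemma sign_pos_mul {c : ℝ} (hc : 0 < c) (x : ℝ) : Real.sign (c*x) = Real.sign x := by
  rcases lt_trichotomy x 0 with hx | hx | hx
  · rw [Real.sign_of_neg hx, Real.sign_of_neg (by nlinarith)]
  · simp [hx]
  · rw [Real.sign_of_pos hx, Real.sign_of_pos (by positivity)]

lemma sign_unit_mul {u : ℝ} (hu : u = 1 ∨ u = -1) {c : ℝ} (hc : 0 < c) (x : ℝ) :
    Real.sign (u*(c*x)) = u * Real.sign x := by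
  rcases hu with rfl | rfl
  · rw [one_mul, one_mul, sign_pos_mul hc]
  · rw [neg_one_mul, Real.sign_neg, sign_pos_mul hc, neg_one_mul]

theorem stmt_17 (a b a' b' : ℤ) (k : ℤ) (s : ℤ) (hs : s = 1 ∨ s = -1)
    (hab : (a : ℝ) + (b : ℝ) * Real.sqrt 2 ≠ 0)
    (h : (a' : ℝ) + (b' : ℝ) * Real.sqrt 2
        = (s : ℝ) * (1 + Real.sqrt 2) ^ k * ((a : ℝ) + (b : ℝ) * Real.sqrt 2)) :
    heckeEta a' b' = heckeEta a b := by
  unfold heckeEta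
  have h2 : Real.sqrt 2 ^ 2 = 2 := Real.sq_sqrt (by norm_num)
  have hr2 : (1:ℝ) < Real.sqrt 2 := by
    nlinarith [Real.sqrt_nonneg 2]
  set r := Real.sqrt 2 with hrdef
  have ht0 : (0:ℝ) < 1 + r := by linarith
  have hL : 0 < Real.log (1+r) := Real.log_pos (by linarith)
  set L := Real.log (1+r) with hLdef
  set x := (a:ℝ) + (b:ℝ)*r with hxdef
  set y := (a:ℝ) - (b:ℝ)*r with hydef
  set x' := (a':ℝ) + (b':ℝ)*r with hx'def
  set y' := (a':ℝ) - (b':ℝ)*r with hy'def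
  -- basic facts about s
  have hsR : (s:ℝ) = 1 ∨ (s:ℝ) = -1 := by rcases hs with rfl|rfl <;> norm_num
  have hss : (s:ℝ) * (s:ℝ) = 1 := by rcases hsR with h'|h' <;> rw [h'] <;> norm_num
  have hs0 : (s:ℝ) ≠ 0 := by rcases hsR with h'|h' <;> rw [h'] <;> norm_num
  -- (-1)^k is ±1
  have hek : ((-1:ℝ))^k = 1 ∨ ((-1:ℝ))^k = -1 := by
    rcases Int.even_or_odd k with he|he
    · left; exact he.neg_one_zpow
    · right; exact he.neg_one_zpow
  have hek0 : ((-1:ℝ))^k ≠ 0 := by rcases hek with h'|h' <;> rw [h'] <;> norm_num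
  -- representation of units
  obtain ⟨p, q, hp1, hp2⟩ := zpow_repr k
  rw [← hrdef] at hp1 hp2
  -- conjugate relation
  rw [hp1] at h
  have hcomp : ((a' - s*(p*a+2*q*b) : ℤ) : ℝ) + ((b' - s*(p*b+q*a) : ℤ):ℝ)*r = 0 := by
    push_cast
    linear_combination h + (s:ℝ)*(q:ℝ)*(b:ℝ)*h2
  obtain ⟨hA, hB⟩ := int_sqrt2_eq_zero _ _ hcomp
  have haZ : a' = s*(p*a+2*q*b) := sub_eq_zero.mp hA
  have hbZ : b' = s*(p*b+q*a) := sub_eq_zero.mp hB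
  have hconj : y' = (s:ℝ) * (1 - r)^k * y := by
    rw [hy'def, hydef, hp2, haZ, hbZ]
    push_cast
    linear_combination (-(s:ℝ)*(q:ℝ)*(b:ℝ))*h2
  have h' : x' = (s:ℝ) * (1 + r)^k * x := by rw [hp1]; exact h
  clear h hcomp hA hB haZ hbZ hp1 hp2
  -- positivity
  have htk : (0:ℝ) < (1+r)^k := zpow_pos ht0 k
  have hy0 : y ≠ 0 := by
    intro h0
    obtain ⟨ha0, hb0⟩ := int_sqrt2_eq_zero a (-b) (by push_cast; rw [hydef] at h0; linarith)
    exact hab (by rw [hxdef] at hab ⊢; push_cast [ha0, neg_eq_zero.mp hb0]; ring)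
  have hx0 : x ≠ 0 := hab
  -- 1 - r = -1/(1+r)
  have hu : (1 - r) = -1 / (1+r) := by
    rw [eq_div_iff ht0.ne']
    linear_combination -h2
  have hueq : (1-r)^k = (-1:ℝ)^k * ((1+r)^k)⁻¹ := by
    rw [hu, div_zpow, div_eq_mul_inv]
  have hx'0 : x' ≠ 0 := by rw [h']; exact mul_ne_zero (mul_ne_zero hs0 htk.ne') hx0
  have hy'0 : y' ≠ 0 := by
    rw [hconj, hueq]
    exact mul_ne_zero (mul_ne_zero hs0 (mul_ne_zero hek0 (inv_ne_zero htk.ne'))) hy0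
  -- sign computation
  have hSx : Real.sign x' = (s:ℝ) * Real.sign x := by
    rw [h', mul_assoc]; exact sign_unit_mul hsR htk _
  have hsk : (s:ℝ)*(-1:ℝ)^k = 1 ∨ (s:ℝ)*(-1:ℝ)^k = -1 := by
    rcases hsR with h1|h1 <;> rcases hek with h2'|h2' <;> rw [h1, h2'] <;> norm_num
  have hSy : Real.sign y' = ((s:ℝ)*(-1:ℝ)^k) * Real.sign y := by
    have e : (s:ℝ) * (1-r)^k * y = ((s:ℝ)*(-1:ℝ)^k) * (((1+r)^k)⁻¹ * y) := by
      rw [hueq]; ring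
    rw [hconj, e]
    exact sign_unit_mul hsk (inv_pos.mpr htk) _
  have hprod : Real.sign x' * Real.sign y' = (-1:ℝ)^k * (Real.sign x * Real.sign y) := by
    rw [hSx, hSy]
    linear_combination ((-1:ℝ)^k * Real.sign x * Real.sign y) * hss
  -- log computation
  have hlogs : Real.log (s:ℝ) = 0 := by
    rcases hsR with h1|h1 <;> rw [h1] <;> simp [Real.log_neg_eq_log]
  have hloge : Real.log ((-1:ℝ)^k) = 0 := by
    rcases hek with h1|h1 <;> rw [h1] <;> simp [Real.log_neg_eq_log]
  have hlogx' : Real.log x' = k*L + Real.log x := by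
    rw [h', Real.log_mul (mul_ne_zero hs0 htk.ne') hx0,
      Real.log_mul hs0 htk.ne', Real.log_zpow, hlogs, hLdef]
    ring
  have hlogy' : Real.log y' = -(k*L) + Real.log y := by
    have hne : (1-r)^k ≠ 0 := by rw [hueq]; exact mul_ne_zero hek0 (inv_ne_zero htk.ne')
    rw [hconj, Real.log_mul (mul_ne_zero hs0 hne) hy0,
      Real.log_mul hs0 hne, hueq,
      Real.log_mul hek0 (inv_ne_zero htk.ne'), hloge, Real.log_inv, Real.log_zpow,
      hlogs, hLdef]
    ring
  have hlog : Real.log |x'/y'| = 2*k*L + Real.log |x/y| := by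
    rw [Real.log_abs, Real.log_abs, Real.log_div hx'0 hy'0, Real.log_div hx0 hy0,
      hlogx', hlogy']
    ring
  -- exponential part
  have hLC : (L:ℂ) ≠ 0 := by exact_mod_cast hL.ne'
  have hexp : Complex.exp (Complex.I * (π/(2*L)) * (Real.log |x'/y'| : ℝ))
      = (-1:ℂ)^k * Complex.exp (Complex.I * (π/(2*L)) * (Real.log |x/y| : ℝ)) := by
    rw [hlog]
    have harg : Complex.I * ((π:ℝ)/(2*L)) * ((2*k*L + Real.log |x/y| : ℝ):ℂ)
        = (k:ℂ)*((π:ℝ)*Complex.I) + Complex.I * ((π:ℝ)/(2*L)) * ((Real.log |x/y| : ℝ):ℂ) := by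
      push_cast
      field_simp
    push_cast at harg ⊢
    rw [harg, Complex.exp_add, Complex.exp_int_mul, Complex.exp_pi_mul_I]
  -- assemble
  have hcc : ((-1:ℂ)^k) * ((-1:ℂ)^k) = 1 := by rw [← mul_zpow]; norm_num
  rw [hprod, hexp]
  push_cast
  linear_combination ((Real.sign x : ℝ):ℂ) * ((Real.sign y : ℝ):ℂ) *
    Complex.exp (Complex.I * ((π:ℝ)/(2*L)) * ((Real.log |x/y| : ℝ):ℂ)) * hcc
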